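/- arXiv:2105.09780 — 3 statements merged into one kernel-verified Lean document; each statement's English description precedes it below -/
import Mathlib

section
/- Coordinate form of Poissonization: let Λ^{ij}(x) and E^i(x) be smooth functions on ℝ^m satisfying Λ^{pi}∂_pΛ^{jk} + Λ^{pj}∂_pΛ^{ki} + Λ^{pk}∂_pΛ^{ij} = E^iΛ^{jk} + E^jΛ^{ki} + E^kΛ^{ij} and E^k∂_kΛ^{ij} − Λ^{kj}∂_kE^i − Λ^{ik}∂_kE^j = 0. Define on ℝ^m × ℝ (with extra coordinate τ) the skew matrix P with components P^{ij} = e^{−τ}Λ^{ij}, P^{0 i} = e^{−τ}E^i, P^{i 0} = −e^{−τ}E^i, P^{00} = 0. Then P satisfies the Jacobi identity for a Poisson bivector: P^{LI}∂_L P^{JK} + P^{LJ}∂_L P^{KI} + P^{LK}∂_L P^{IJ} = 0 for all indices I,J,K ∈ {0,1,…,m}. -/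
open scoped BigOperators

/-- Partial derivative in direction `i` for functions on `ℝ^m`. -/
noncomputable def pdBase {m : ℕ} (i : Fin m) (f : (Fin m → ℝ) → ℝ) (x : Fin m → ℝ) : ℝ :=
  fderiv ℝ f x (Pi.single i 1)

/-- Coordinate directions on `ℝ^m × ℝ`; `none` is the extra coordinate `τ`. -/
noncomputable def dirExt {m : ℕ} : Option (Fin m) → (Fin m → ℝ) × ℝ
  | some i => (Pi.single i 1, 0)
  | none => (0, 1)

/-- Partial derivative in direction `I` for functions on `ℝ^m × ℝ`. -/
noncomputable def pdExt {m : ℕ} (I : Option (Fin m)) (F : (Fin m → ℝ) × ℝ → ℝ)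
    (p : (Fin m → ℝ) × ℝ) : ℝ :=
  fderiv ℝ F p (dirExt I)

variable {m : ℕ}

lemma hasFDerivAt_expmul (f : (Fin m → ℝ) → ℝ) (hf : Differentiable ℝ f) (p : (Fin m → ℝ) × ℝ) :
    HasFDerivAt (fun q : (Fin m → ℝ) × ℝ => Real.exp (-q.2) * f q.1)
      (Real.exp (-p.2) • ((fderiv ℝ f p.1).comp (ContinuousLinearMap.fst ℝ (Fin m → ℝ) ℝ))
        + f p.1 • (Real.exp (-p.2) • (-(ContinuousLinearMap.snd ℝ (Fin m → ℝ) ℝ)))) p := by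
  have hneg : HasFDerivAt (fun q : (Fin m → ℝ) × ℝ => -q.2)
      (-(ContinuousLinearMap.snd ℝ (Fin m → ℝ) ℝ)) p := (hasFDerivAt_snd).neg
  have h1 : HasFDerivAt (fun q : (Fin m → ℝ) × ℝ => Real.exp (-q.2))
      (Real.exp (-p.2) • (-(ContinuousLinearMap.snd ℝ (Fin m → ℝ) ℝ))) p :=
    by have := (Real.hasDerivAt_exp (-p.2)).comp_hasFDerivAt p hneg; exact this
  have h2 : HasFDerivAt (fun q : (Fin m → ℝ) × ℝ => f q.1)
      ((fderiv ℝ f p.1).comp (ContinuousLinearMap.fst ℝ (Fin m → ℝ) ℝ)) p :=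
    ((hf p.1).hasFDerivAt).comp p hasFDerivAt_fst
  exact h1.mul h2

lemma pdExt_some_exp (f : (Fin m → ℝ) → ℝ) (hf : Differentiable ℝ f) (k : Fin m)
    (p : (Fin m → ℝ) × ℝ) :
    pdExt (some k) (fun q : (Fin m → ℝ) × ℝ => Real.exp (-q.2) * f q.1) p
      = Real.exp (-p.2) * pdBase k f p.1 := by
  rw [pdExt, (hasFDerivAt_expmul f hf p).fderiv]
  simp [dirExt, pdBase]

lemma pdExt_none_exp (f : (Fin m → ℝ) → ℝ) (hf : Differentiable ℝ f)
    (p : (Fin m → ℝ) × ℝ) :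
    pdExt none (fun q : (Fin m → ℝ) × ℝ => Real.exp (-q.2) * f q.1) p
      = -(Real.exp (-p.2) * f p.1) := by
  rw [pdExt, (hasFDerivAt_expmul f hf p).fderiv]
  simp [dirExt]
  ring

lemma pdExt_neg (L : Option (Fin m)) (F : (Fin m → ℝ) × ℝ → ℝ) (p : (Fin m → ℝ) × ℝ) :
    pdExt L (fun q => -(F q)) p = -(pdExt L F p) := by
  simp [pdExt, fderiv_neg]

lemma pdExt_zero (L : Option (Fin m)) (p : (Fin m → ℝ) × ℝ) :
    pdExt L (fun _ : (Fin m → ℝ) × ℝ => (0:ℝ)) p = 0 := by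
  simp [pdExt]


/-- The Poissonized bivector `P` on `ℝ^m × ℝ`: `P^{ij} = e^{-τ}Λ^{ij}`,
`P^{0i} = e^{-τ}E^i = -P^{i0}`, `P^{00} = 0`. -/
noncomputable def poissonization {m : ℕ} (Λ : Fin m → Fin m → (Fin m → ℝ) → ℝ)
    (E : Fin m → (Fin m → ℝ) → ℝ) :
    Option (Fin m) → Option (Fin m) → (Fin m → ℝ) × ℝ → ℝ
  | some i, some j => fun p => Real.exp (-p.2) * Λ i j p.1
  | none, some j => fun p => Real.exp (-p.2) * E j p.1
  | some i, none => fun p => -(Real.exp (-p.2) * E i p.1)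
  | none, none => fun _ => 0

section
variable {m : ℕ} (Λ : Fin m → Fin m → (Fin m → ℝ) → ℝ) (E : Fin m → (Fin m → ℝ) → ℝ)

lemma poiss_ss (i j : Fin m) : poissonization Λ E (some i) (some j)
    = fun p => Real.exp (-p.2) * Λ i j p.1 := rfl
lemma poiss_ns (j : Fin m) : poissonization Λ E none (some j)
    = fun p => Real.exp (-p.2) * E j p.1 := rfl
lemma poiss_sn (i : Fin m) : poissonization Λ E (some i) none
    = fun p => -(Real.exp (-p.2) * E i p.1) := rfl
lemma poiss_nn : poissonization Λ E none none = fun _ => (0:ℝ) := rfl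
end


/-- Poissonization, coordinate form: if `(Λ,E)` satisfies the Jacobi
structure identities on `ℝ^m`, then `P = e^{-τ}(Λ + ∂_τ ∧ E)` satisfies the Jacobi
identity of a Poisson bivector on `ℝ^m × ℝ`. -/
theorem poissonization_satisfies_poisson_jacobi
    {m : ℕ} (Λ : Fin m → Fin m → (Fin m → ℝ) → ℝ) (E : Fin m → (Fin m → ℝ) → ℝ)
    (hΛsmooth : ∀ i j, ContDiff ℝ (⊤ : ℕ∞) (Λ i j))
    (hEsmooth : ∀ i, ContDiff ℝ (⊤ : ℕ∞) (E i))
    (hΛskew : ∀ i j x, Λ i j x = - Λ j i x)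
    (hJacobi : ∀ i j k x,
      (∑ p, (Λ p i x * pdBase p (Λ j k) x + Λ p j x * pdBase p (Λ k i) x
        + Λ p k x * pdBase p (Λ i j) x)) =
      E i x * Λ j k x + E j x * Λ k i x + E k x * Λ i j x)
    (hLie : ∀ i j x,
      (∑ k, (E k x * pdBase k (Λ i j) x - Λ k j x * pdBase k (E i) x
        - Λ i k x * pdBase k (E j) x)) = 0) :
    ∀ (I J K : Option (Fin m)) (p : (Fin m → ℝ) × ℝ),
      (∑ L : Option (Fin m),
        (poissonization Λ E L I p * pdExt L (poissonization Λ E J K) p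
          + poissonization Λ E L J p * pdExt L (poissonization Λ E K I) p
          + poissonization Λ E L K p * pdExt L (poissonization Λ E I J) p)) = 0 := by
  intro I J K p
  have dΛs : ∀ (i j k : Fin m),
      pdExt (some k) (fun q : (Fin m → ℝ) × ℝ => Real.exp (-q.2) * Λ i j q.1) p
        = Real.exp (-p.2) * pdBase k (Λ i j) p.1 :=
    fun i j k => pdExt_some_exp _ ((hΛsmooth i j).differentiable (by simp)) k p
  have dΛ0 : ∀ (i j : Fin m),
      pdExt none (fun q : (Fin m → ℝ) × ℝ => Real.exp (-q.2) * Λ i j q.1) p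
        = -(Real.exp (-p.2) * Λ i j p.1) :=
    fun i j => pdExt_none_exp _ ((hΛsmooth i j).differentiable (by simp)) p
  have dEs : ∀ (i k : Fin m),
      pdExt (some k) (fun q : (Fin m → ℝ) × ℝ => Real.exp (-q.2) * E i q.1) p
        = Real.exp (-p.2) * pdBase k (E i) p.1 :=
    fun i k => pdExt_some_exp _ ((hEsmooth i).differentiable (by simp)) k p
  have dE0 : ∀ (i : Fin m),
      pdExt none (fun q : (Fin m → ℝ) × ℝ => Real.exp (-q.2) * E i q.1) p
        = -(Real.exp (-p.2) * E i p.1) :=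
    fun i => pdExt_none_exp _ ((hEsmooth i).differentiable (by simp)) p
  rcases I with _|i <;> rcases J with _|j <;> rcases K with _|k <;>
    simp only [Fintype.sum_option, poiss_ss, poiss_ns, poiss_sn, poiss_nn,
      pdExt_neg, pdExt_zero, dΛs, dΛ0, dEs, dE0]
  case none.none.none => simp
  case none.none.some =>
    rw [Finset.sum_eq_zero fun x _ => by ring]; ring
  case none.some.none =>
    rw [Finset.sum_eq_zero fun x _ => by ring]; ring
  case some.none.none =>
    rw [Finset.sum_eq_zero fun x _ => by ring]; ring
  case none.some.some =>
    have h1 : (∑ x : Fin m,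
        (-(Real.exp (-p.2) * E x p.1) * (Real.exp (-p.2) * pdBase x (Λ j k) p.1) +
            Real.exp (-p.2) * Λ x j p.1 * -(Real.exp (-p.2) * pdBase x (E k) p.1) +
          Real.exp (-p.2) * Λ x k p.1 * (Real.exp (-p.2) * pdBase x (E j) p.1)))
        = -(Real.exp (-p.2) * Real.exp (-p.2)) * ∑ x : Fin m,
            (E x p.1 * pdBase x (Λ j k) p.1 - Λ x k p.1 * pdBase x (E j) p.1
              - Λ j x p.1 * pdBase x (E k) p.1) := by
      rw [Finset.mul_sum]
      exact Finset.sum_congr rfl fun q _ => by rw [hΛskew j q p.1]; ring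
    rw [h1, hLie j k p.1]; ring
  case some.none.some =>
    have h1 : (∑ x : Fin m,
        (Real.exp (-p.2) * Λ x i p.1 * (Real.exp (-p.2) * pdBase x (E k) p.1) +
            -(Real.exp (-p.2) * E x p.1) * (Real.exp (-p.2) * pdBase x (Λ k i) p.1) +
          Real.exp (-p.2) * Λ x k p.1 * -(Real.exp (-p.2) * pdBase x (E i) p.1)))
        = -(Real.exp (-p.2) * Real.exp (-p.2)) * ∑ x : Fin m,
            (E x p.1 * pdBase x (Λ k i) p.1 - Λ x i p.1 * pdBase x (E k) p.1
              - Λ k x p.1 * pdBase x (E i) p.1) := by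
      rw [Finset.mul_sum]
      exact Finset.sum_congr rfl fun q _ => by rw [hΛskew k q p.1]; ring
    rw [h1, hLie k i p.1]; ring
  case some.some.none =>
    have h1 : (∑ x : Fin m,
        (Real.exp (-p.2) * Λ x i p.1 * -(Real.exp (-p.2) * pdBase x (E j) p.1) +
            Real.exp (-p.2) * Λ x j p.1 * (Real.exp (-p.2) * pdBase x (E i) p.1) +
          -(Real.exp (-p.2) * E x p.1) * (Real.exp (-p.2) * pdBase x (Λ i j) p.1)))
        = -(Real.exp (-p.2) * Real.exp (-p.2)) * ∑ x : Fin m,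
            (E x p.1 * pdBase x (Λ i j) p.1 - Λ x j p.1 * pdBase x (E i) p.1
              - Λ i x p.1 * pdBase x (E j) p.1) := by
      rw [Finset.mul_sum]
      exact Finset.sum_congr rfl fun q _ => by rw [hΛskew i q p.1]; ring
    rw [h1, hLie i j p.1]; ring
  case some.some.some =>
    have h1 : (∑ x : Fin m,
        (Real.exp (-p.2) * Λ x i p.1 * (Real.exp (-p.2) * pdBase x (Λ j k) p.1) +
            Real.exp (-p.2) * Λ x j p.1 * (Real.exp (-p.2) * pdBase x (Λ k i) p.1) +
          Real.exp (-p.2) * Λ x k p.1 * (Real.exp (-p.2) * pdBase x (Λ i j) p.1)))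
        = Real.exp (-p.2) * Real.exp (-p.2) * ∑ x : Fin m,
            (Λ x i p.1 * pdBase x (Λ j k) p.1 + Λ x j p.1 * pdBase x (Λ k i) p.1
              + Λ x k p.1 * pdBase x (Λ i j) p.1) := by
      rw [Finset.mul_sum]
      exact Finset.sum_congr rfl fun q _ => by ring
    rw [h1, hJacobi i j k p.1]; ring
end

section
/- On an LCS manifold, substituting η = −ι_{dX}ω + λα and E = ♯_Λα into the Jacobi sigma model Lagrangian density η_i ∧ dX^i + ½Λ^{ij}η_i ∧ η_j − E^iη_i ∧ λ, all terms involving λ cancel, and the density equals ω_{ij} dX^i ∧ dX^j (up to the overall convention factor). -/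
open scoped BigOperators

/-! Since `Λ = ω⁻¹`, contracting the substitution with `Λ` inverts it: `Λ^{ij}η_j = −dX^i + E^iλ`.
So the middle term is `½(−η_i ∧ dX^i + E^iη_i ∧ λ)` and the density collapses to
`½ η_i ∧ dX^i − ½ E^iη_i ∧ λ`. The constraint kills `E^iη_i`; and because `Λ`, the inverse of a
skew matrix, is skew, `E^iη_i = α_i dX^i`, so the `λ`-part `λ ∧ α_i dX^i` of `η_i ∧ dX^i` vanishes
too, leaving `½ ω_{ij} dX^i ∧ dX^j`. -/

open Finset ExteriorAlgebra
open scoped Matrix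

section SkewSymmetric

variable {R : Type*} [CommRing R] {n : Type*} [Fintype n]

theorem Matrix.transpose_eq_neg_of_mul_eq_one [DecidableEq n] {A B : Matrix n n R}
    (hAB : A * B = 1) (hB : Bᵀ = -B) : Aᵀ = -A := by
  have hBA : B * A = 1 := mul_eq_one_comm.mp hAB
  have hAtB : Aᵀ * B = -1 := by
    have h : Aᵀ * Bᵀ = 1 := by rw [← Matrix.transpose_mul, hBA, Matrix.transpose_one]
    rw [hB, Matrix.mul_neg] at h
    exact neg_eq_iff_eq_neg.mp h
  calc Aᵀ = Aᵀ * (B * A) := by rw [hBA, Matrix.mul_one]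
    _ = -A := by rw [← Matrix.mul_assoc, hAtB, Matrix.neg_mul, Matrix.one_mul]

theorem skew_of_sum_mul_eq_ite [DecidableEq n] {ω Λ : n → n → R}
    (hω : ∀ i j, ω i j = -ω j i)
    (hΛω : ∀ i k, ∑ j, Λ i j * ω j k = if i = k then 1 else 0) (i j : n) :
    Λ i j = -Λ j i := by
  have hAB : Matrix.of Λ * Matrix.of ω = 1 := by
    ext i k
    simpa [Matrix.mul_apply, Matrix.one_apply] using hΛω i k
  have hB : (Matrix.of ω)ᵀ = -Matrix.of ω := by
    ext i j
    simpa using hω j i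
  simpa using congrFun (congrFun (Matrix.transpose_eq_neg_of_mul_eq_one hAB hB) j) i

variable {M : Type*} [AddCommGroup M] [Module R M]

theorem sum_sum_smul_swap_of_skew {ω : n → n → R} (hω : ∀ i j, ω i j = -ω j i)
    (F : n → n → M) : ∑ i, ∑ j, ω i j • F j i = -∑ i, ∑ j, ω i j • F i j := by
  rw [sum_comm]
  simp only [← sum_neg_distrib, ← neg_smul, ← hω]

theorem sum_sum_mul_mul_eq_zero_of_skew [NoZeroDivisors R] [CharZero R] {Λ : n → n → R}
    (hΛ : ∀ i j, Λ i j = -Λ j i) (a : n → R) : ∑ i, ∑ j, Λ i j * (a i * a j) = 0 := by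
  have h := sum_sum_smul_swap_of_skew hΛ fun i j => a i * a j
  simp only [smul_eq_mul, mul_comm (a _) (a _)] at h
  exact CharZero.eq_neg_self_iff.mp h

end SkewSymmetric

section Substitution

variable {R : Type*} [CommRing R] {n : Type*} [Fintype n] [DecidableEq n]
  {M : Type*} [AddCommGroup M] [Module R M]
  {ω Λ : n → n → R} {α E : n → R} {x η : n → M} {y : M}

theorem sum_smul_of_eq_neg_sum_smul_add_smul
    (hΛω : ∀ i k, ∑ j, Λ i j * ω j k = if i = k then 1 else 0)
    (hE : ∀ i, E i = ∑ j, Λ i j * α j) (hη : ∀ i, η i = -∑ j, ω i j • x j + α i • y) (i : n) :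
    ∑ j, Λ i j • η j = -x i + E i • y := by
  simp only [hη, smul_add, smul_neg, smul_sum, smul_smul, sum_add_distrib, sum_neg_distrib,
    ← sum_smul, hE i]
  rw [sum_comm]
  simp only [← sum_smul, hΛω, ite_smul, one_smul, zero_smul, sum_ite_eq, mem_univ, if_true]

theorem sum_smul_eq_of_eq_neg_sum_smul_add_smul [NoZeroDivisors R] [CharZero R]
    (hω : ∀ i j, ω i j = -ω j i) (hΛω : ∀ i k, ∑ j, Λ i j * ω j k = if i = k then 1 else 0)
    (hE : ∀ i, E i = ∑ j, Λ i j * α j) (hη : ∀ i, η i = -∑ j, ω i j • x j + α i • y) :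
    ∑ i, E i • η i = ∑ i, α i • x i := by
  have hΛ := skew_of_sum_mul_eq_ite hω hΛω
  have hαE : ∑ k, α k * E k = 0 := by
    simpa only [hE, mul_sum, mul_left_comm] using sum_sum_mul_mul_eq_zero_of_skew hΛ α
  calc ∑ i, E i • η i = -∑ k, α k • ∑ i, Λ k i • η i := by
        simp only [hE, sum_smul, smul_sum, smul_smul, ← sum_neg_distrib]
        rw [sum_comm]
        refine sum_congr rfl fun k _ => sum_congr rfl fun i _ => ?_
        rw [hΛ k i, mul_neg, neg_smul, neg_neg, mul_comm]
    _ = ∑ k, α k • x k - (∑ k, α k * E k) • y := by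
        simp only [sum_smul_of_eq_neg_sum_smul_add_smul hΛω hE hη, smul_add, smul_neg,
          sum_add_distrib, sum_neg_distrib, sum_smul, smul_smul]
        abel
    _ = ∑ k, α k • x k := by rw [hαE, zero_smul, sub_zero]

end Substitution

section ExteriorAlgebra

variable {R : Type*} [CommRing R] {n : Type*} [Fintype n]
  {W : Type*} [AddCommGroup W] [Module R W]

theorem ExteriorAlgebra.sum_smul_ι_mul_ι (c : n → R) (x : n → W) (y : W) :
    ∑ i, c i • (ι R (x i) * ι R y) = ι R (∑ i, c i • x i) * ι R y := by
  simp only [map_sum, map_smul, sum_mul, smul_mul_assoc]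

theorem ExteriorAlgebra.sum_ι_mul_ι_of_eq_neg_sum_smul_add_smul {ω : n → n → R} {α : n → R}
    {x η : n → W} {y : W} (hω : ∀ i j, ω i j = -ω j i)
    (hη : ∀ i, η i = -∑ j, ω i j • x j + α i • y) :
    ∑ i, ι R (η i) * ι R (x i) =
      ∑ i, ∑ j, ω i j • (ι R (x i) * ι R (x j)) + ι R y * ι R (∑ i, α i • x i) := by
  simp only [hη, map_add, map_neg, map_sum, map_smul, add_mul, neg_mul, sum_mul, smul_mul_assoc,
    sum_add_distrib, sum_neg_distrib, mul_sum, mul_smul_comm]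
  rw [sum_sum_smul_swap_of_skew hω, neg_neg]

theorem ExteriorAlgebra.sum_sum_smul_ι_mul_ι_of_eq_neg_sum_smul_add_smul [DecidableEq n]
    {ω Λ : n → n → R} {α E : n → R} {x η : n → W} {y : W}
    (hΛω : ∀ i k, ∑ j, Λ i j * ω j k = if i = k then 1 else 0)
    (hE : ∀ i, E i = ∑ j, Λ i j * α j) (hη : ∀ i, η i = -∑ j, ω i j • x j + α i • y) :
    ∑ i, ∑ j, Λ i j • (ι R (η i) * ι R (η j)) =
      -∑ i, ι R (η i) * ι R (x i) + ι R (∑ i, E i • η i) * ι R y := by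
  calc ∑ i, ∑ j, Λ i j • (ι R (η i) * ι R (η j))
      = ∑ i, ι R (η i) * ι R (∑ j, Λ i j • η j) := by
        simp only [map_sum, map_smul, mul_sum, mul_smul_comm]
    _ = ∑ i, ι R (η i) * ι R (-x i + E i • y) := by
        simp only [sum_smul_of_eq_neg_sum_smul_add_smul hΛω hE hη]
    _ = _ := by
        simp only [← sum_smul_ι_mul_ι, map_add, map_neg, map_smul, mul_add, mul_neg,
          mul_smul_comm, sum_add_distrib, sum_neg_distrib]

end ExteriorAlgebra

theorem lcs_second_order_action_density_general
    {W : Type*} [AddCommGroup W] [Module ℝ W]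
    {m : ℕ} (ω Λ : Fin m → Fin m → ℝ)
    (hωskew : ∀ i j, ω i j = - ω j i)
    (hΛω : ∀ i k, (∑ j, Λ i j * ω j k) = if i = k then 1 else 0)
    (α : Fin m → ℝ) (E : Fin m → ℝ)
    (hE : ∀ i, E i = ∑ j, Λ i j * α j)
    (dX : Fin m → W) (lam : W)
    (η : Fin m → W)
    (hη : ∀ i, η i = (-∑ j, ω i j • dX j) + α i • lam)
    (hconstraint : (∑ i, E i • η i) = 0) :
    (∑ i, ExteriorAlgebra.ι ℝ (η i) * ExteriorAlgebra.ι ℝ (dX i))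
      + (1/2 : ℝ) • (∑ i, ∑ j, Λ i j •
          (ExteriorAlgebra.ι ℝ (η i) * ExteriorAlgebra.ι ℝ (η j)))
      - (∑ i, E i • (ExteriorAlgebra.ι ℝ (η i) * ExteriorAlgebra.ι ℝ lam)) =
    (1/2 : ℝ) • (∑ i, ∑ j, ω i j •
        (ExteriorAlgebra.ι ℝ (dX i) * ExteriorAlgebra.ι ℝ (dX j))) := by
  have hαdX : ∑ i, α i • dX i = 0 :=
    (sum_smul_eq_of_eq_neg_sum_smul_add_smul hωskew hΛω hE hη).symm.trans hconstraint
  rw [sum_sum_smul_ι_mul_ι_of_eq_neg_sum_smul_add_smul hΛω hE hη, sum_smul_ι_mul_ι,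
    sum_ι_mul_ι_of_eq_neg_sum_smul_add_smul hωskew hη, hconstraint, hαdX]
  simp only [map_zero, zero_mul, mul_zero, add_zero, sub_zero]
  module

/-- substituting `η_i = −ω_{ij}dX^j + α_i λ` (with `Λ = ω^{-1}`,
`E = ♯_Λα`) into the Jacobi sigma model Lagrangian density
`η_i ∧ dX^i + ½Λ^{ij}η_i ∧ η_j − E^iη_i ∧ λ`, all terms involving `λ` cancel
(on shell, i.e. using the constraint `E^iη_i = 0`) and the density equals
`½ ω_{ij} dX^i ∧ dX^j`. Here the worldsheet wedge is computed in the exterior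
algebra of the 2-dimensional cotangent fiber `W`. -/
theorem lcs_second_order_action_density
    {W : Type*} [AddCommGroup W] [Module ℝ W] [FiniteDimensional ℝ W]
    (hW : Module.finrank ℝ W = 2)
    {m : ℕ} (ω Λ : Fin m → Fin m → ℝ)
    (hωskew : ∀ i j, ω i j = - ω j i)
    (hΛω : ∀ i k, (∑ j, Λ i j * ω j k) = if i = k then 1 else 0)
    (α : Fin m → ℝ) (E : Fin m → ℝ)
    (hE : ∀ i, E i = ∑ j, Λ i j * α j)
    (dX : Fin m → W) (lam : W)
    (η : Fin m → W)
    (hη : ∀ i, η i = (-∑ j, ω i j • dX j) + α i • lam)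
    (hconstraint : (∑ i, E i • η i) = 0) :
    (∑ i, ExteriorAlgebra.ι ℝ (η i) * ExteriorAlgebra.ι ℝ (dX i))
      + (1/2 : ℝ) • (∑ i, ∑ j, Λ i j •
          (ExteriorAlgebra.ι ℝ (η i) * ExteriorAlgebra.ι ℝ (η j)))
      - (∑ i, E i • (ExteriorAlgebra.ι ℝ (η i) * ExteriorAlgebra.ι ℝ lam)) =
    (1/2 : ℝ) • (∑ i, ∑ j, ω i j •
        (ExteriorAlgebra.ι ℝ (dX i) * ExteriorAlgebra.ι ℝ (dX j))) :=
  lcs_second_order_action_density_general ω Λ hωskew hΛω α E hE dX lam η hη hconstraint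
end

section
/- Second-order contact action as pullback: if η_i = (dϑ)_{ij}dX^j and λ = ϑ_i dX^i solve the contact Jacobi sigma model equations, then the on-shell value of the action density η_i∧dX^i + ½Λ^{ij}η_i∧η_j − E^iη_i∧λ equals −½ (dϑ)_{ij} dX^i∧dX^j. -/
/-!
On shell, the sharp identity `σ(♯_Λγ, ·) = −γ + γ(E)ϑ` applied to `η = σ·dX` gives
`Λ^{ij}η_j = −dX^i + E^iλ`, while `ι_Eσ = 0` gives `E^iη_i = 0`. Hence the `E`-term vanishes and
the `Λ`-term equals `−η_i∧dX^i`, so the density collapses to `½ η_i∧dX^i`, which is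
`−½ σ_{ij} dX^i∧dX^j` by skew-symmetry of `σ`. Only bilinearity of the product is used, not its
antisymmetry.
-/

open Finset

section Contraction

variable {R ι κ : Type*} [Fintype ι] [Fintype κ]

theorem sum_smul_sum_smul_comm {M : Type*} [CommSemiring R] [AddCommMonoid M] [Module R M]
    (c : ι → R) (a : ι → κ → R) (x : κ → M) :
    ∑ i, c i • ∑ j, a i j • x j = ∑ j, (∑ i, c i * a i j) • x j := by
  simp only [smul_sum, smul_smul, sum_smul]
  exact sum_comm

theorem sum_smul_sum_smul_eq_of_sharp {M : Type*} [CommRing R] [AddCommGroup M] [Module R M]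
    [DecidableEq ι] {ϑ E : ι → R} {σ L : ι → ι → R}
    (hsharp : ∀ (γ : ι → R) (j : ι),
      ∑ k, (∑ i, γ i * L i k) * σ k j = -γ j + (∑ i, γ i * E i) * ϑ j)
    (i : ι) (x : ι → M) :
    ∑ k, L i k • ∑ l, σ k l • x l = -x i + E i • ∑ l, ϑ l • x l := by
  have hrow : ∀ l, ∑ k, L i k * σ k l = -(if l = i then 1 else 0) + E i * ϑ l := fun l => by
    simpa [Pi.single_apply, ite_mul, eq_comm] using hsharp (Pi.single i 1) l
  simp only [sum_smul_sum_smul_comm, hrow, add_smul, neg_smul, sum_add_distrib, sum_neg_distrib,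
    ite_smul, one_smul, zero_smul, sum_ite_eq', mem_univ, if_true, mul_smul, ← smul_sum]

end Contraction

section Bilinear

variable {R A ι : Type*} [Fintype ι]

theorem sum_sum_smul_mul [CommSemiring R] [Semiring A] [Algebra R A]
    (c : ι → ι → R) (a b : ι → A) :
    ∑ i, ∑ j, c i j • (a i * b j) = ∑ i, a i * ∑ j, c i j • b j := by
  simp only [mul_sum, mul_smul_comm]

theorem sum_mul_eq_neg_sum_sum_smul_mul [CommRing R] [Ring A] [Algebra R A]
    {σ : ι → ι → R} (hσ : ∀ i j, σ i j = -σ j i) (a : ι → A) :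
    ∑ i, (∑ j, σ i j • a j) * a i = -∑ i, ∑ j, σ i j • (a i * a j) := by
  simp only [sum_mul, smul_mul_assoc, ← sum_neg_distrib]
  rw [sum_comm]
  exact sum_congr rfl fun i _ => sum_congr rfl fun j _ => by rw [hσ j i, neg_smul]

end Bilinear

theorem contact_second_order_action_density_general
    {W : Type*} [AddCommGroup W] [Module ℝ W]
    (m : ℕ)
    (ϑ : Fin m → ℝ) (σ : Fin m → Fin m → ℝ) (E : Fin m → ℝ)
    (L : Fin m → Fin m → ℝ)
    (hσskew : ∀ i j, σ i j = - σ j i)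
    (hEσ : ∀ j, (∑ i, E i * σ i j) = 0)
    (hsharpσ : ∀ (γ : Fin m → ℝ) (j : Fin m),
      (∑ k, (∑ i, γ i * L i k) * σ k j) = - γ j + (∑ i, γ i * E i) * ϑ j)
    (dX : Fin m → W) (η : Fin m → W) (lam : W)
    (hη : ∀ i, η i = ∑ j, σ i j • dX j)
    (hlam : lam = ∑ i, ϑ i • dX i) :
    (∑ i, ExteriorAlgebra.ι ℝ (η i) * ExteriorAlgebra.ι ℝ (dX i))
      + (1/2 : ℝ) • (∑ i, ∑ j, L i j •
          (ExteriorAlgebra.ι ℝ (η i) * ExteriorAlgebra.ι ℝ (η j)))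
      - (∑ i, E i • (ExteriorAlgebra.ι ℝ (η i) * ExteriorAlgebra.ι ℝ lam)) =
    (-(1/2 : ℝ)) • (∑ i, ∑ j, σ i j •
        (ExteriorAlgebra.ι ℝ (dX i) * ExteriorAlgebra.ι ℝ (dX j))) := by
  set e := ExteriorAlgebra.ι ℝ (M := W)
  have hLη : ∀ i, ∑ j, L i j • η j = -dX i + E i • lam := fun i => by
    simpa only [hη, hlam] using sum_smul_sum_smul_eq_of_sharp hsharpσ i dX
  have hEη : ∑ i, E i • η i = 0 := by
    simp only [hη, sum_smul_sum_smul_comm, hEσ, zero_smul, sum_const_zero]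
  have hEterm : ∑ i, E i • (e (η i) * e lam) = 0 := by
    simp only [← smul_mul_assoc, ← sum_mul, ← map_smul, ← map_sum, hEη, map_zero, zero_mul]
  have hLterm : ∑ i, ∑ j, L i j • (e (η i) * e (η j)) = -∑ i, e (η i) * e (dX i) := by
    have hLeη : ∀ i, ∑ j, L i j • e (η j) = e (-dX i + E i • lam) := fun i => by
      simp only [← hLη, map_sum, map_smul]
    simp only [sum_sum_smul_mul, hLeη, map_add, map_neg, map_smul, mul_add, mul_neg, mul_smul_comm,
      sum_add_distrib, sum_neg_distrib, hEterm, add_zero]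
  have hkinetic : ∑ i, e (η i) * e (dX i) = -∑ i, ∑ j, σ i j • (e (dX i) * e (dX j)) := by
    simp only [hη, map_sum, map_smul]
    exact sum_mul_eq_neg_sum_sum_smul_mul hσskew _
  rw [hLterm, hEterm, hkinetic]
  module

/-- on a contact manifold (pointwise algebraic data `ϑ, σ, E, Λ` with
`ϑ(E)=1`, `ι_Eσ=0`, `Λ(ϑ,·)=0`, `σ(♯_Λγ,·) = −γ + γ(E)ϑ`), substituting the
on-shell values `η_i = σ_{ij}dX^j` and `λ = ϑ_i dX^i` into the Jacobi sigma model
density `η_i∧dX^i + ½Λ^{ij}η_i∧η_j − E^iη_i∧λ` yields `−½ σ_{ij} dX^i∧dX^j`. -/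
theorem contact_second_order_action_density
    {W : Type*} [AddCommGroup W] [Module ℝ W] [FiniteDimensional ℝ W]
    (hW : Module.finrank ℝ W = 2)
    (n : ℕ) (m : ℕ) (hm : m = 2 * n + 1)
    (ϑ : Fin m → ℝ) (σ : Fin m → Fin m → ℝ) (E : Fin m → ℝ)
    (L : Fin m → Fin m → ℝ)
    (hσskew : ∀ i j, σ i j = - σ j i)
    (hLskew : ∀ i j, L i j = - L j i)
    (hϑE : (∑ i, ϑ i * E i) = 1)
    (hEσ : ∀ j, (∑ i, E i * σ i j) = 0)
    (hϑL : ∀ j, (∑ i, ϑ i * L i j) = 0)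
    (hsharpσ : ∀ (γ : Fin m → ℝ) (j : Fin m),
      (∑ k, (∑ i, γ i * L i k) * σ k j) = - γ j + (∑ i, γ i * E i) * ϑ j)
    (dX : Fin m → W) (η : Fin m → W) (lam : W)
    (hη : ∀ i, η i = ∑ j, σ i j • dX j)
    (hlam : lam = ∑ i, ϑ i • dX i) :
    (∑ i, ExteriorAlgebra.ι ℝ (η i) * ExteriorAlgebra.ι ℝ (dX i))
      + (1/2 : ℝ) • (∑ i, ∑ j, L i j •
          (ExteriorAlgebra.ι ℝ (η i) * ExteriorAlgebra.ι ℝ (η j)))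
      - (∑ i, E i • (ExteriorAlgebra.ι ℝ (η i) * ExteriorAlgebra.ι ℝ lam)) =
    (-(1/2 : ℝ)) • (∑ i, ∑ j, σ i j •
        (ExteriorAlgebra.ι ℝ (dX i) * ExteriorAlgebra.ι ℝ (dX j))) :=
  contact_second_order_action_density_general m ϑ σ E L hσskew hEσ hsharpσ dX η lam hη hlam
end
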